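/- For every ideal I of the polynomial ring ℂ[X], the ℂ-linear span of the set {E(k,f) : k ∈ ℤ, f ∈ I} inside the endomorphism algebra of ℂ[t,t⁻¹] is closed under the commutator bracket; that is, this span is a Lie subalgebra of the Lie algebra of ℂ-linear endomorphisms of ℂ[t,t⁻¹]. -/

import Mathlib

/- The operators `E k f = t^k f(D)` compose by moving `f(D)` past `t^l`, which shifts its argument:
`f(D) t^l = t^l f(D + l)`. Hence the bracket of `E k f` and `E l g` is `E (k + l) h` with
`h = g·f(X + l) - f·g(X + k)`, which lies in `I` whenever `f` and `g` do; bilinearity of the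
bracket then extends closure from the generators to their span. -/

open Polynomial

/-- The endomorphism of `ℂ[t,t⁻¹]` (modeled as `ℤ →₀ ℂ`) sending `tⁿ` to `f(n)·t^{n+k}`;
it represents the differential operator `t^k·f(D)` with `D = t·d/dt`. -/
noncomputable def E (k : ℤ) (f : Polynomial ℂ) : Module.End ℂ (ℤ →₀ ℂ) :=
  Finsupp.lsum ℂ fun n : ℤ => f.eval (n : ℂ) • Finsupp.lsingle (n + k)

theorem Submodule.lie_mem_span_of_forall_lie_mem_span {R L : Type*} [CommRing R] [LieRing L]
    [LieAlgebra R L] {s : Set L} (hs : ∀ x ∈ s, ∀ y ∈ s, ⁅x, y⁆ ∈ span R s) {x y : L}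
    (hx : x ∈ span R s) (hy : y ∈ span R s) : ⁅x, y⁆ ∈ span R s := by
  induction hx, hy using span_induction₂ with
  | mem_mem x y hx hy => exact hs x hx y hy
  | zero_left => simp
  | zero_right => simp
  | add_left _ _ _ _ _ _ hx hy => simpa using add_mem hx hy
  | add_right _ _ _ _ _ _ hy hz => simpa using add_mem hy hz
  | smul_left r _ _ _ _ h => simpa using smul_mem _ r h
  | smul_right r _ _ _ _ h => simpa using smul_mem _ r h

lemma E_single (k : ℤ) (f : ℂ[X]) (n : ℤ) (c : ℂ) :
    E k f (Finsupp.single n c) = f.eval (n : ℂ) • Finsupp.single (n + k) c := by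
  simp only [E, Finsupp.lsum_single, LinearMap.smul_apply, Finsupp.lsingle_apply]

lemma E_sub (k : ℤ) (f g : ℂ[X]) : E k (f - g) = E k f - E k g := by
  refine Finsupp.lhom_ext fun n c => ?_
  simp only [LinearMap.sub_apply, E_single, eval_sub, sub_smul]

lemma E_mul_E (k l : ℤ) (f g : ℂ[X]) :
    E k f * E l g = E (k + l) (g * f.comp (X + C (l : ℂ))) := by
  refine Finsupp.lhom_ext fun n c => ?_
  rw [Module.End.mul_apply, E_single, map_smul, E_single, E_single, smul_smul, add_assoc,
    add_comm l k]
  congr 1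
  simp only [eval_mul, eval_comp, eval_add, eval_X, eval_C]
  push_cast
  ring

lemma lie_E_E (k l : ℤ) (f g : ℂ[X]) :
    ⁅E k f, E l g⁆ = E (k + l) (g * f.comp (X + C (l : ℂ)) - f * g.comp (X + C (k : ℂ))) := by
  rw [Ring.lie_def, E_sub, E_mul_E, E_mul_E, add_comm l k]

theorem span_E_ideal_lie_closed (I : Ideal (Polynomial ℂ)) :
    ∀ A ∈ Submodule.span ℂ {T : Module.End ℂ (ℤ →₀ ℂ) | ∃ k : ℤ, ∃ f ∈ I, T = E k f},
    ∀ B ∈ Submodule.span ℂ {T : Module.End ℂ (ℤ →₀ ℂ) | ∃ k : ℤ, ∃ f ∈ I, T = E k f},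
      ⁅A, B⁆ ∈ Submodule.span ℂ {T : Module.End ℂ (ℤ →₀ ℂ) | ∃ k : ℤ, ∃ f ∈ I, T = E k f} := by
  -- the commutator Lie algebra structure on an associative algebra is not a global instance
  let _ := LieRing.ofAssociativeRing (A := Module.End ℂ (ℤ →₀ ℂ))
  let _ : LieAlgebra ℂ (Module.End ℂ (ℤ →₀ ℂ)) := LieAlgebra.ofAssociativeAlgebra
  intro A hA B hB
  refine Submodule.lie_mem_span_of_forall_lie_mem_span ?_ hA hB
  rintro _ ⟨k, f, hf, rfl⟩ _ ⟨l, g, hg, rfl⟩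
  rw [lie_E_E]
  exact Submodule.subset_span
    ⟨k + l, _, sub_mem (I.mul_mem_right _ hg) (I.mul_mem_right _ hf), rfl⟩
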